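/- arXiv:1509.03226 — 2 statements merged into one kernel-verified Lean document; each statement's English description precedes it below -/
import Mathlib

section
/- For every n ≥ 0, the determinant of the 3×3 integer matrix whose (i,j) entry is F^{(1)}_{n+i+j} (0 ≤ i, j ≤ 2), i.e. the Hankel matrix built from first-generation hyperfibonacci numbers, equals (−1)^n. -/
/-- Hyperfibonacci numbers: `hfib 0 n = F_n`, `hfib (r+1) n = ∑_{k=0}^n hfib r k`. -/
def hfib : ℕ → ℕ → ℕ
  | 0, n => Nat.fib n
  | r + 1, n => ∑ k ∈ Finset.range (n + 1), hfib r k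

lemma hfib_one (n : ℕ) : (hfib 1 n : ℤ) = (Nat.fib (n + 2) : ℤ) - 1 := by
  have := Nat.fib_succ_eq_succ_sum (n + 1)
  simp only [hfib]
  push_cast [this]
  ring

lemma cassini (n : ℕ) :
    (Nat.fib (n + 3) : ℤ) ^ 2 - Nat.fib (n + 3) * Nat.fib (n + 2) - (Nat.fib (n + 2) : ℤ) ^ 2
      = (-1) ^ n := by
  induction n with
  | zero => decide
  | succ k ih =>
    have h : (Nat.fib (k + 4) : ℤ) = Nat.fib (k + 3) + Nat.fib (k + 2) := by
      rw [show k + 4 = (k + 2) + 2 by ring, Nat.fib_add_two]; push_cast; ring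
    rw [show k + 1 + 3 = k + 4 by ring, show k + 1 + 2 = k + 3 by ring, h]
    linear_combination -ih

/-- the 3×3 Hankel determinant with `(i,j)` entry `F^{(1)}_{n+i+j}`
equals `(-1)^n`. -/
theorem stmt_13 (n : ℕ) :
    (Matrix.of fun i j : Fin 3 => (hfib 1 (n + i + j) : ℤ)).det = (-1) ^ n := by
  have fa : ∀ m, (Nat.fib (m + 2) : ℤ) = Nat.fib (m + 1) + Nat.fib m := by
    intro m; rw [Nat.fib_add_two]; push_cast; ring
  set a : ℤ := (Nat.fib (n + 2) : ℤ) with ha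
  set b : ℤ := (Nat.fib (n + 3) : ℤ) with hb
  have h2 : (Nat.fib (n + 4) : ℤ) = b + a := by rw [show n + 4 = (n + 2) + 2 by ring, fa]
  have h3 : (Nat.fib (n + 5) : ℤ) = (b + a) + b := by
    rw [show n + 5 = (n + 3) + 2 by ring, fa, h2]
  have h4 : (Nat.fib (n + 6) : ℤ) = ((b + a) + b) + (b + a) := by
    rw [show n + 6 = (n + 4) + 2 by ring, fa, h3, h2]
  rw [Matrix.det_fin_three]
  simp only [Matrix.of_apply, hfib_one]
  norm_num [Fin.sum_univ_succ, show ((0:Fin 3):ℕ) = 0 from rfl,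
    show ((1:Fin 3):ℕ) = 1 from rfl, show ((2:Fin 3):ℕ) = 2 from rfl]
  rw [show n + 0 + 0 + 2 = n + 2 by ring, show n + 0 + 1 + 2 = n + 3 by ring,
    show n + 1 + 0 + 2 = n + 3 by ring, show n + 0 + 2 + 2 = n + 4 by ring,
    show n + 2 + 0 + 2 = n + 4 by ring, show n + 1 + 1 + 2 = n + 4 by ring,
    show n + 1 + 2 + 2 = n + 5 by ring, show n + 2 + 1 + 2 = n + 5 by ring,
    show n + 2 + 2 + 2 = n + 6 by ring, h2, h3, h4, ← ha, ← hb]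
  have := cassini n
  rw [← ha, ← hb] at this
  linear_combination this
end

section
/- (Generalized Cassini determinant.) For every r ≥ 1 and every n ≥ 0, the determinant of the (r+2)×(r+2) integer matrix A_{r,n} with (i,j) entry F^{(r)}_{n+i+j} for 0 ≤ i, j ≤ r+1 equals (−1)^{n + ⌊(r+3)/2⌋}. -/
/-!
The Hankel determinant of a sequence equals that of its iterated forward differences at `0`: the
two Hankel matrices differ by the unitriangular Pascal matrix on either side (Gregory–Newton).
The differences `b d` of `m ↦ F^{(r)}_{n+m}` are `F^{(r-d)}_{n+d}` for `d ≤ r`, and from `d = r` on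
the Fibonacci numbers `F_{n+2r-d}` continued to negative indices, so `b d = b (d+1) + b (d+2)`
there. Subtracting columns `j+1` and `j+2` from column `j` for `j < r` then makes the Hankel matrix
of `b` block triangular: an `r × r` block vanishing below its antidiagonal, on which every entry
is `-1`, and the `2 × 2` Cassini block `F_n F_{n-2} - F_{n-1}^2 = -(-1)^n`.
-/

open Finset Matrix

section Hankel

variable {R : Type*} [CommRing R]

def hankel (N : ℕ) (f : ℕ → R) : Matrix (Fin N) (Fin N) R := of fun i j => f (i + j)

def pascalMatrix (N : ℕ) : Matrix (Fin N) (Fin N) R := of fun i k => ((i : ℕ).choose k : R)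

theorem det_pascalMatrix (N : ℕ) : det (pascalMatrix N : Matrix (Fin N) (Fin N) R) = 1 := by
  rw [det_of_isLowerTriangular]
  · simp [pascalMatrix]
  · intro i k hik
    simp [pascalMatrix, Nat.choose_eq_zero_of_lt (show (i : ℕ) < k from hik)]

theorem shift_eq_sum_fin_fwdDiff_iter (f : ℕ → R) (y : ℕ) {N j : ℕ} (hj : j < N) :
    f (y + j) = ∑ l : Fin N, (j.choose l : R) * (fwdDiff 1)^[l] f y := by
  rw [Fin.sum_univ_eq_sum_range (fun l => (j.choose l : R) * (fwdDiff 1)^[l] f y),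
    ← sum_subset (range_subset_range.2 hj) fun l _ hl => ?_]
  · simpa using shift_eq_sum_fwdDiff_iter 1 f j y
  · rw [Nat.choose_eq_zero_of_lt (by simpa using hl), Nat.cast_zero, zero_mul]

theorem hankel_eq_pascalMatrix_mul (N : ℕ) (f : ℕ → R) :
    hankel N f =
      pascalMatrix N * hankel N (fun d => (fwdDiff 1)^[d] f 0) * (pascalMatrix N)ᵀ := by
  ext i j
  have hdiff (l : ℕ) :
      (fwdDiff 1)^[l] f i = ∑ k : Fin N, ((i : ℕ).choose k : R) * (fwdDiff 1)^[k + l] f 0 := by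
    simpa [Function.iterate_add_apply] using
      shift_eq_sum_fin_fwdDiff_iter ((fwdDiff 1)^[l] f) 0 i.2
  simp only [hankel, pascalMatrix, mul_apply, of_apply, transpose_apply, sum_mul,
    shift_eq_sum_fin_fwdDiff_iter f i j.2, hdiff, mul_sum]
  exact sum_congr rfl fun k _ => sum_congr rfl fun l _ => by ring

theorem det_hankel_eq_det_hankel_fwdDiff_iter (N : ℕ) (f : ℕ → R) :
    det (hankel N f) = det (hankel N fun d => (fwdDiff 1)^[d] f 0) := by
  rw [hankel_eq_pascalMatrix_mul, det_mul, det_mul, det_transpose, det_pascalMatrix, one_mul,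
    mul_one]

theorem det_hankel_of_eq_zero_of_le (m : ℕ) (g : ℕ → R) (hg : ∀ d, m ≤ d → g d = 0) :
    det (hankel m g) = (-1) ^ (m / 2) * g (m - 1) ^ m := by
  induction m generalizing g with
  | zero => simp
  | succ m ih =>
    rw [det_succ_row _ (Fin.last m), Fintype.sum_eq_single 0 fun j hj => ?_]
    · have hminor : (hankel (m + 1) g).submatrix (Fin.last m).succAbove (Fin.succAbove 0) =
          hankel m fun d => g (d + 1) := by
        ext i j
        simp [hankel, add_assoc]
      rw [hminor, ih _ fun d hd => hg _ (by omega)]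
      rcases m with _ | m
      · simp [hankel]
      · simp only [hankel, of_apply, Fin.val_last, Fin.val_zero, add_zero, Nat.add_sub_cancel]
        have hsign : (-1 : R) ^ (m + 1) * (-1) ^ ((m + 1) / 2) = (-1) ^ ((m + 1 + 1) / 2) := by
          rw [← pow_add]
          refine neg_one_pow_congr ?_
          obtain ⟨k, rfl | rfl⟩ := Nat.even_or_odd' m <;> simp only [Nat.even_iff] <;> omega
        rw [← hsign]
        ring
    · rw [show hankel (m + 1) g (Fin.last m) j = 0 from hg _ ?_, mul_zero, zero_mul]
      have : (j : ℕ) ≠ 0 := fun h => hj (Fin.ext h)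
      simp only [Fin.val_last]
      omega

def fibReducedHankel (r : ℕ) (b : ℕ → R) : Matrix (Fin (r + 2)) (Fin (r + 2)) R :=
  of fun i j => if (j : ℕ) < r then b (i + j) - b (i + j + 1) - b (i + j + 2) else b (i + j)

theorem det_hankel_eq_det_fibReducedHankel (r : ℕ) (b : ℕ → R) :
    det (hankel (r + 2) b) = det (fibReducedHankel r b) := by
  let S (a : ℕ) : Matrix (Fin (r + 2)) (Fin (r + 2)) R :=
    of fun k j => if (j : ℕ) < r ∧ (k : ℕ) = j + a then 1 else 0
  have hS (a : ℕ) (ha : a ≤ 2) (i j : Fin (r + 2)) :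
      (hankel (r + 2) b * S a) i j = if (j : ℕ) < r then b (i + j + a) else 0 := by
    simp only [mul_apply, hankel, S, of_apply]
    rw [Fin.sum_univ_eq_sum_range
      (fun k => b (i + k) * if (j : ℕ) < r ∧ k = j + a then 1 else 0)]
    split_ifs with hj
    · simp [hj, add_assoc, show (j : ℕ) + a < r + 2 by omega]
    · simp [hj]
  have hdet : (1 - S 1 - S 2).det = 1 := by
    rw [det_of_isLowerTriangular]
    · simp [S]
    · intro k j hkj
      have : (k : ℕ) < j := hkj
      simp [S, Fin.ne_of_lt this, show (k : ℕ) ≠ j + 1 by omega, show (k : ℕ) ≠ j + 2 by omega]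
  rw [← mul_one (det (hankel _ b)), ← hdet, ← det_mul]
  congr 1
  ext i j
  rw [mul_sub, mul_sub, mul_one, Matrix.sub_apply, Matrix.sub_apply, hS 1 (by norm_num),
    hS 2 (by norm_num)]
  simp only [fibReducedHankel, hankel, of_apply]
  split_ifs <;> ring

theorem det_fibReducedHankel (r : ℕ) (b : ℕ → R)
    (hb : ∀ d, r ≤ d → b d = b (d + 1) + b (d + 2)) :
    det (fibReducedHankel r b) =
      det (hankel r fun d => b d - b (d + 1) - b (d + 2)) *
        det (hankel 2 fun d => b (2 * r + d)) := by
  rw [← det_reindex_self finSumFinEquiv.symm,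
    ← det_fromBlocks_zero₂₁ _ (of fun (i : Fin r) (j : Fin 2) => b (i + (r + j)))]
  congr 1
  ext (i | i) (j | j)
  · simp [fibReducedHankel, hankel]
  · simp [fibReducedHankel]
  · simp [fibReducedHankel, hb (r + i + j) (by omega)]
  · simp [fibReducedHankel, hankel, two_mul, add_assoc, add_left_comm]

theorem det_hankel_of_fib_tail (r : ℕ) (b : ℕ → R)
    (hb : ∀ d, r ≤ d → b d = b (d + 1) + b (d + 2)) :
    det (hankel (r + 2) b) = (-1) ^ (r / 2) * (b (r - 1) - b r - b (r + 1)) ^ r *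
      (b (2 * r) * b (2 * r + 2) - b (2 * r + 1) ^ 2) := by
  rw [det_hankel_eq_det_fibReducedHankel, det_fibReducedHankel r b hb,
    det_hankel_of_eq_zero_of_le r _ fun d hd => by rw [hb d hd]; ring, det_fin_two]
  rcases r with _ | r <;> simp [hankel, add_assoc, sq]

end Hankel

theorem fwdDiff_hfib_succ (s n : ℕ) :
    fwdDiff 1 (fun m => (hfib (s + 1) (n + m) : ℤ)) = fun m => (hfib s (n + 1 + m) : ℤ) := by
  ext m
  simp [fwdDiff, hfib, sum_range_succ, ← add_assoc, add_right_comm n 1 m]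

theorem fwdDiff_iter_hfib (s k n : ℕ) :
    (fwdDiff 1)^[k] (fun m => (hfib (s + k) (n + m) : ℤ)) =
      fun m => (hfib s (n + k + m) : ℤ) := by
  induction k generalizing n with
  | zero => rfl
  | succ k ih =>
    rw [Function.iterate_succ_apply, ← add_assoc, fwdDiff_hfib_succ, ih, add_right_comm n 1 k,
      add_assoc n k 1]

theorem fwdDiff_iter_intFib (x : ℤ) (t : ℕ) :
    (fwdDiff 1)^[t] (fun m : ℕ => Int.fib (x + m)) = fun m : ℕ => Int.fib (x - t + m) := by
  induction t generalizing x with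
  | zero => simp
  | succ t ih =>
    have hdiff : fwdDiff 1 (fun m : ℕ => Int.fib (x + m)) = fun m : ℕ => Int.fib (x - 1 + m) := by
      ext m
      simp only [fwdDiff, Nat.cast_add, Nat.cast_one]
      rw [show x + (m + 1) = x - 1 + m + 2 by ring, show x + m = x - 1 + m + 1 by ring]
      linear_combination Int.fib_add_two (x - 1 + m)
    rw [Function.iterate_succ_apply, hdiff, ih]
    push_cast
    ring_nf

theorem hfib_one_add_one (m : ℕ) : hfib 1 m + 1 = Nat.fib (m + 2) :=
  (Nat.fib_succ_eq_succ_sum (m + 1)).symm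

def hfibDiff (r n d : ℕ) : ℤ := (fwdDiff 1)^[d] (fun m => (hfib r (n + m) : ℤ)) 0

theorem hfibDiff_add (r n t : ℕ) : hfibDiff r n (r + t) = Int.fib (n + r - t) := by
  have hdiff := fwdDiff_iter_hfib 0 r n
  rw [zero_add] at hdiff
  have hfib_zero_eq :
      (fun m => (hfib 0 (n + r + m) : ℤ)) = fun m : ℕ => Int.fib ((n + r : ℕ) + m) := by
    funext m
    rw [← Nat.cast_add, Int.fib_natCast, hfib]
  rw [hfibDiff, add_comm, Function.iterate_add_apply, hdiff, hfib_zero_eq, fwdDiff_iter_intFib]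
  simp

theorem hfibDiff_eq_add_of_le {r d : ℕ} (n : ℕ) (hd : r ≤ d) :
    hfibDiff r n d = hfibDiff r n (d + 1) + hfibDiff r n (d + 2) := by
  obtain ⟨t, rfl⟩ := Nat.exists_eq_add_of_le hd
  have h := Int.fib_add_two ((n : ℤ) + r - (t + 2))
  rw [show (n : ℤ) + r - (t + 2) + 2 = n + r - t by ring,
    show (n : ℤ) + r - (t + 2) + 1 = n + r - (t + 1) by ring] at h
  rw [add_assoc, add_assoc, hfibDiff_add, hfibDiff_add, hfibDiff_add]
  push_cast
  linear_combination h

theorem hfibDiff_sub_sub_pow (r n : ℕ) :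
    (hfibDiff r n (r - 1) - hfibDiff r n r - hfibDiff r n (r + 1)) ^ r = (-1) ^ r := by
  rcases r with _ | s
  · simp
  congr 1
  have h1 : hfibDiff (s + 1) n s = hfib 1 (n + s) := by
    have h := congr_fun (fwdDiff_iter_hfib 1 s n) 0
    rw [add_comm 1 s] at h
    simpa [hfibDiff] using h
  have h2 := hfibDiff_add (s + 1) n 0
  have h3 := hfibDiff_add (s + 1) n 1
  rw [show (n : ℤ) + (s + 1 : ℕ) - (0 : ℕ) = (n + s + 1 : ℕ) by push_cast; ring,
    Int.fib_natCast] at h2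
  rw [show (n : ℤ) + (s + 1 : ℕ) - (1 : ℕ) = (n + s : ℕ) by push_cast; ring,
    Int.fib_natCast] at h3
  have h4 : (hfib 1 (n + s) : ℤ) + 1 = Nat.fib (n + s) + Nat.fib (n + s + 1) := by
    exact_mod_cast (hfib_one_add_one (n + s)).trans Nat.fib_add_two
  rw [Nat.add_sub_cancel, h1, h2, h3]
  linear_combination h4

theorem hfibDiff_cassini (r n : ℕ) :
    hfibDiff r n (2 * r) * hfibDiff r n (2 * r + 2) - hfibDiff r n (2 * r + 1) ^ 2 =
      -(-1) ^ n := by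
  rw [two_mul, add_assoc, add_assoc, hfibDiff_add, hfibDiff_add, hfibDiff_add]
  push_cast
  rw [show (n : ℤ) + r - r = n - 1 + 1 by ring, show (n : ℤ) + r - (r + 2) = n - 1 - 1 by ring,
    show (n : ℤ) + r - (r + 1) = n - 1 by ring, Int.fib_succ_mul_fib_pred_sub_fib_sq]
  rcases n with _ | k
  · simp
  · simp [pow_succ]

theorem stmt_15_general (r : ℕ) (n : ℕ) :
    (Matrix.of fun i j : Fin (r + 2) => (hfib r (n + i + j) : ℤ)).det =
      (-1) ^ (n + (r + 3) / 2) := by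
  have hhankel : (of fun i j : Fin (r + 2) => (hfib r (n + i + j) : ℤ)) =
      hankel (r + 2) fun m => (hfib r (n + m) : ℤ) := by
    ext i j
    simp [hankel, add_assoc]
  rw [hhankel, det_hankel_eq_det_hankel_fwdDiff_iter]
  change det (hankel (r + 2) (hfibDiff r n)) = _
  rw [det_hankel_of_fib_tail r (hfibDiff r n) fun _ => hfibDiff_eq_add_of_le n,
    hfibDiff_sub_sub_pow, hfibDiff_cassini]
  calc _ = (-1 : ℤ) ^ (r / 2 + r + 1 + n) := by ring
    _ = _ := neg_one_pow_congr <| by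
      obtain ⟨k, rfl | rfl⟩ := Nat.even_or_odd' r <;> simp only [Nat.even_iff] <;> omega

/-- generalized Cassini determinant:
`det A_{r,n} = (-1)^{n + ⌊(r+3)/2⌋}` where `A_{r,n}` is the `(r+2)×(r+2)`
Hankel matrix with `(i,j)` entry `F^{(r)}_{n+i+j}`. -/
theorem stmt_15 (r : ℕ) (hr : 1 ≤ r) (n : ℕ) :
    (Matrix.of fun i j : Fin (r + 2) => (hfib r (n + i + j) : ℤ)).det =
      (-1) ^ (n + (r + 3) / 2) :=
  stmt_15_general r n
end
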